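/- The function R satisfies, for every q ≥ 0, the two identities λ̄·R(1,q+1) − λ·R(0,q) = M(q,0) and R(0,q+1) = ρ·R(0,q) + c_{M̃}·ρ^{q+1}, where M(q,0) = ∑_{(ỹ',q')∈𝕏, q' ≤ q} (C − f(ỹ',q'))·π_Ψ(ỹ',q'). -/

import Mathlib

/-!
`r(·, i)` is the image under `P^i` of the signed measure `(f - C) π_Ψ`, which has total mass zero
because `C` is the stationary mean of `f`. The states `(0,u)` and `(1,u+1)` both leave `u`
customers once the departure has happened, so `r(·, i+1)` depends on `r(·, i)` only through the
level masses `α_i(u) = r((0,u),i) + r((1,u+1),i)`, which evolve under a birth–death kernel. Their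
partial sums `D_i(u) = ∑_{v<u} α_i(v)` vanish at `u = 0` and satisfy the same three-term
recursion, so the supersolution `s^u` with `ρ < s < 1` gives `|D_i(u)| ≤ B θ^i s^u` with `θ < 1`.
Hence every series `R(ψ)` converges, and `R` solves the Poisson equation `R = (f - C) π_Ψ + R P`.
Summed over the levels `≤ q` this equation gives the first identity; the second follows from the
equation at `(0,q+1)`, the first identity at `q` and `q+1`, and the geometric closed form of
`M(q,0)`.
-/

open scoped BigOperators

noncomputable section

/-- The state space `𝕏 = {(0,q) : q ∈ ℕ} ∪ {(1,q) : q ≥ 1}` of the joint chain,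
with the departure indicator encoded as a `Bool`. -/
abbrev XS : Type := {p : Bool × ℕ // p.1 = true → 1 ≤ p.2}

/-- `ρ = λμ̄/(λ̄μ)`. -/
def rho (lam mu : ℝ) : ℝ := lam * (1 - mu) / ((1 - lam) * mu)

/-- The invariant distribution `π_Q` of the queue-length chain. -/
def piQ (lam mu : ℝ) (q : ℕ) : ℝ :=
  if q = 0 then ((1 - lam) * mu - lam * (1 - mu)) / mu
  else ((1 - lam) * mu - lam * (1 - mu)) / (mu * (1 - mu)) * rho lam mu ^ q

/-- The queue kernel `K` on ℕ. -/
def kerQ (lam mu : ℝ) (q q' : ℕ) : ℝ :=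
  if q = 0 then (if q' = 1 then lam else if q' = 0 then 1 - lam else 0)
  else if q' + 1 = q then (1 - lam) * mu
  else if q' = q + 1 then lam * (1 - mu)
  else if q' = q then 1 - lam * (1 - mu) - (1 - lam) * mu
  else 0

/-- The invariant distribution `π_Ψ` of the joint chain `(ỹ, q)`. -/
def piPsi (lam mu : ℝ) : Bool × ℕ → ℝ
  | (false, 0) => piQ lam mu 0
  | (false, q + 1) => (1 - mu) * piQ lam mu (q + 1)
  | (true, 0) => 0
  | (true, q + 1) => mu * piQ lam mu (q + 1)

/-- The transition kernel `P` of the joint chain: from `(ỹ,q)`, with arrival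
`x̃ = q' - q + ỹ ∈ {0,1}` (probability `λ` resp. `λ̄`), the next state is `(ỹ',q')`
with departure probability `1,0` at `q' = 0` and `μ̄, μ` at `q' ≥ 1`. -/
def kerP (lam mu : ℝ) (ψ ψ' : Bool × ℕ) : ℝ :=
  (if ((ψ'.2 : ℤ) - (ψ.2 : ℤ) + (if ψ.1 then 1 else 0)) = 1 then lam
   else if ((ψ'.2 : ℤ) - (ψ.2 : ℤ) + (if ψ.1 then 1 else 0)) = 0 then 1 - lam
   else 0) *
  (if ψ'.2 = 0 then (if ψ'.1 then 0 else 1) else (if ψ'.1 then mu else 1 - mu))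

/-- The `i`-step kernel `P^i` of the joint chain. -/
def kerIter (lam mu : ℝ) : ℕ → Bool × ℕ → Bool × ℕ → ℝ
  | 0, ψ, ψ' => if ψ = ψ' then 1 else 0
  | i + 1, ψ, ψ' => ∑' ψ'' : XS, kerIter lam mu i ψ ψ''.val * kerP lam mu ψ''.val ψ'

/-- The information-density function `f` on the joint state space. -/
def fInfo (lam mu : ℝ) : Bool × ℕ → ℝ
  | (false, 0) => Real.log (1 / (1 - lam))
  | (false, _ + 1) => Real.log ((1 - mu) / (1 - lam))
  | (true, 0) => 0
  | (true, _ + 1) => Real.log (mu / lam)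

/-- The binary entropy function. -/
def Hbin (p : ℝ) : ℝ := -(p * Real.log p) - (1 - p) * Real.log (1 - p)

/-- The capacity `C = H(λ) - (λ/μ) H(μ)` of the timing channel. -/
def Cap (lam mu : ℝ) : ℝ := Hbin lam - lam / mu * Hbin mu

/-- The constant `c_{M0}`. -/
def cM0 (lam mu : ℝ) : ℝ :=
  (1 - lam) / (1 - mu) *
    (mu * Real.log (mu / lam) + (1 - mu) * Real.log ((1 - mu) / (1 - lam)) - Cap lam mu)

/-- The constant `c_{M̃}`. -/
def cMt (lam mu : ℝ) : ℝ :=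
  cM0 lam mu / mu + (Cap lam mu - Real.log (mu / lam)) * piQ lam mu 0 / (1 - mu)

/-- The partial stationary sum `M(q,0) = ∑_{ψ' ∈ 𝕏, q' ≤ q} (C - f(ψ')) π_Ψ(ψ')`. -/
def M0 (lam mu : ℝ) (q : ℕ) : ℝ :=
  ∑' ψ : {p : Bool × ℕ // (p.1 = true → 1 ≤ p.2) ∧ p.2 ≤ q},
    (Cap lam mu - fInfo lam mu ψ.val) * piPsi lam mu ψ.val

/-- The partial stationary sum
`M(q,1) = ∑_{ψ' ∈ 𝕏 : q' < q, or q' = q and ỹ' = 1} (C - f(ψ')) π_Ψ(ψ')`. -/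
def M1 (lam mu : ℝ) (q : ℕ) : ℝ :=
  ∑' ψ : {p : Bool × ℕ // (p.1 = true → 1 ≤ p.2) ∧ (p.2 < q ∨ (p.2 = q ∧ p.1 = true))},
    (Cap lam mu - fInfo lam mu ψ.val) * piPsi lam mu ψ.val

/-- `r(ψ,i) = ∑_{ψ' ∈ 𝕏} (f(ψ') - C) π_Ψ(ψ') P^i(ψ',ψ)`. -/
def rfun (lam mu : ℝ) (i : ℕ) (ψ : Bool × ℕ) : ℝ :=
  ∑' ψ' : XS, (fInfo lam mu ψ'.val - Cap lam mu) * piPsi lam mu ψ'.val *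
    kerIter lam mu i ψ'.val ψ

/-- `R(ψ) = ∑_{i=0}^∞ r(ψ,i)`. -/
def Rfun (lam mu : ℝ) (ψ : Bool × ℕ) : ℝ := ∑' i : ℕ, rfun lam mu i ψ

/-- The stationary autocovariance
`Cov_i = ∑_{ψ,ψ' ∈ 𝕏} π_Ψ(ψ)(f(ψ)-C)(f(ψ')-C) P^i(ψ,ψ')`. -/
def covI (lam mu : ℝ) (i : ℕ) : ℝ :=
  ∑' p : XS × XS,
    piPsi lam mu p.1.val * (fInfo lam mu p.1.val - Cap lam mu) *
      (fInfo lam mu p.2.val - Cap lam mu) * kerIter lam mu i p.1.val p.2.val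

/-- The Lyapunov function `V(ỹ,q) = (q - ỹ)/(μ - λ)`. -/
def Vlya (lam mu : ℝ) (ψ : Bool × ℕ) : ℝ :=
  ((ψ.2 : ℝ) - (if ψ.1 then 1 else 0)) / (mu - lam)

/-- Stationary path probability `ℙ_n` for block length `n = m+1`:
`π_Ψ(ψ_0) ∏_{l=0}^{n-2} P(ψ_l, ψ_{l+1})`. -/
def pathP (lam mu : ℝ) (m : ℕ) (ψ : Fin (m + 1) → XS) : ℝ :=
  piPsi lam mu (ψ 0).val * ∏ l : Fin m, kerP lam mu (ψ l.castSucc).val (ψ l.succ).val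

/-- The partial sum `S_n = ∑_{i=0}^{n-1} f(ψ_i)` along a path, for `n = m+1`. -/
def Spath (lam mu : ℝ) (m : ℕ) (ψ : Fin (m + 1) → XS) : ℝ :=
  ∑ i : Fin (m + 1), fInfo lam mu (ψ i).val

/-- `Var_n = ∑_paths ℙ_n(path) (S_n - nC)^2`, for `n = m+1`. -/
def VarN (lam mu : ℝ) (m : ℕ) : ℝ :=
  ∑' ψ : Fin (m + 1) → XS,
    pathP lam mu m ψ * (Spath lam mu m ψ - ((m : ℝ) + 1) * Cap lam mu) ^ 2

/-- The explicit stationary variance `V₀` of `f`. -/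
def V0 (lam mu : ℝ) : ℝ :=
  Real.log (1 / (1 - lam)) ^ 2 * piQ lam mu 0 +
    Real.log (mu / lam) ^ 2 * mu * (1 - piQ lam mu 0) +
    Real.log ((1 - mu) / (1 - lam)) ^ 2 * (1 - mu) * (1 - piQ lam mu 0) -
    Cap lam mu ^ 2

/-- The explicit sum of autocovariances `Σ = ∑_{i=0}^∞ Cov_i`. -/
def SigSum (lam mu : ℝ) : ℝ :=
  Real.log (1 / (1 - lam)) *
      (-(cMt lam mu) * rho lam mu / (1 - rho lam mu) - cM0 lam mu * rho lam mu) +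
    Real.log (mu / lam) * cM0 lam mu * rho lam mu / (1 - rho lam mu) +
    Real.log ((1 - mu) / (1 - lam)) * (rho lam mu / (1 - rho lam mu)) *
      (cMt lam mu - rho lam mu * cM0 lam mu)

/-- The asymptotic standard deviation `σ = √(-V₀ + 2Σ)`. -/
def sigmaBE (lam mu : ℝ) : ℝ := Real.sqrt (-(V0 lam mu) + 2 * SigSum lam mu)

/-- The standard normal cumulative distribution function `Φ`. -/
def stdNormCDF (x : ℝ) : ℝ :=
  (Real.sqrt (2 * Real.pi))⁻¹ * ∫ t in Set.Iic x, Real.exp (-(t ^ 2) / 2)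

/-- Single-step departure probability `w(ỹ|q)` (queues that have gone negative,
which can only happen on a zero-probability trajectory, are treated like `q = 0`). -/
def wdep (mu : ℝ) (y : Bool) (q : ℤ) : ℝ :=
  if q ≤ 0 then (if y then 0 else 1) else (if y then mu else 1 - mu)

/-- The queue trajectory `q_i = q_{i-1} + x̃_i - ỹ_{i-1}`, with arrivals `x̃_i = x i`
for `i ≥ 1` and departures `ỹ_i = y i`. -/
def qtraj (q0 : ℕ) (x y : ℕ → Bool) : ℕ → ℤ
  | 0 => (q0 : ℤ)
  | i + 1 => qtraj q0 x y i + (if x (i + 1) then 1 else 0) - (if y i then 1 else 0)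

/-- The block channel `W(y|x) = ∏_{i=0}^{n-1} w(ỹ_i|q_i)` of the queue channel. -/
def Wchan (mu : ℝ) (n : ℕ) (q0 : ℕ) (x y : ℕ → Bool) : ℝ :=
  ∏ i ∈ Finset.range n, wdep mu (y i) (qtraj q0 x y i)

/-- The input distribution `P_X(q_0, x̃) = π_Q(q_0) ∏_{i=1}^{n-1} λ^{x̃_i} λ̄^{1-x̃_i}`. -/
def inpP (lam mu : ℝ) (n : ℕ) (q0 : ℕ) (x : ℕ → Bool) : ℝ :=
  piQ lam mu q0 * ∏ i ∈ Finset.range (n - 1), (if x (i + 1) then lam else 1 - lam)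

/-- Extend an arrival word `(x̃_1, …, x̃_m) ∈ {0,1}^m` to a function on ℕ. -/
def extX (m : ℕ) (xf : Fin m → Bool) : ℕ → Bool :=
  fun i => if h : 1 ≤ i ∧ i ≤ m then xf ⟨i - 1, by omega⟩ else false

/-- Extend an output word `(ỹ_0, …, ỹ_{n-1}) ∈ {0,1}^n` to a function on ℕ. -/
def extY (n : ℕ) (yf : Fin n → Bool) : ℕ → Bool :=
  fun i => if h : i < n then yf ⟨i, h⟩ else false

end

open Finset

theorem abs_convexComb_le {t x y M : ℝ} (ht₀ : 0 ≤ t) (ht₁ : t ≤ 1) (hx : |x| ≤ M)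
    (hy : |y| ≤ M) : |t * x + (1 - t) * y| ≤ M := by
  have h := abs_add_le (t * x) ((1 - t) * y)
  rw [abs_mul, abs_mul, abs_of_nonneg ht₀, abs_of_nonneg (sub_nonneg.2 ht₁)] at h
  nlinarith

theorem abs_le_of_supersolution {a b c s θ B : ℝ} {D : ℕ → ℕ → ℝ} (ha : 0 ≤ a) (hb : 0 ≤ b)
    (hc : 0 ≤ c) (hs : 0 < s) (hθ : a + b * s + c * s ^ 2 ≤ θ * s) (hD0 : ∀ i, D i 0 = 0)
    (hD : ∀ i u, D (i + 1) (u + 1) = a * D i u + b * D i (u + 1) + c * D i (u + 2))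
    (hinit : ∀ u, |D 0 u| ≤ B * s ^ u) (i u : ℕ) : |D i u| ≤ B * θ ^ i * s ^ u := by
  have hB : 0 ≤ B := by simpa [hD0] using hinit 0
  have hθ0 : 0 ≤ θ := nonneg_of_mul_nonneg_left (by nlinarith [sq_nonneg s]) hs
  induction i generalizing u with
  | zero => simpa using hinit u
  | succ i ih =>
    cases u with
    | zero => rw [hD0, abs_zero]; positivity
    | succ u =>
      have hBθ : 0 ≤ B * θ ^ i * s ^ u := by positivity
      calc |D (i + 1) (u + 1)|
          ≤ a * |D i u| + b * |D i (u + 1)| + c * |D i (u + 2)| := by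
            rw [hD]
            refine (abs_add_le _ _).trans (add_le_add ((abs_add_le _ _).trans ?_) ?_) <;>
              simp only [abs_mul, abs_of_nonneg ha, abs_of_nonneg hb, abs_of_nonneg hc, le_refl]
        _ ≤ a * (B * θ ^ i * s ^ u) + b * (B * θ ^ i * s ^ (u + 1)) +
              c * (B * θ ^ i * s ^ (u + 2)) := by gcongr <;> apply ih
        _ = B * θ ^ i * s ^ u * (a + b * s + c * s ^ 2) := by ring
        _ ≤ B * θ ^ i * s ^ u * (θ * s) := mul_le_mul_of_nonneg_left hθ hBθ
        _ = B * θ ^ (i + 1) * s ^ (u + 1) := by ring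

variable {lam mu : ℝ}

lemma kerP_eq_zero {b c : Bool} {m n : ℕ} (h₁ : n + b.toNat ≠ m + 1) (h₀ : n + b.toNat ≠ m) :
    kerP lam mu (b, m) (c, n) = 0 := by
  have hb : (if b = true then (1 : ℤ) else 0) = b.toNat := by cases b <;> rfl
  simp only [kerP, hb]
  rw [if_neg (by omega), if_neg (by omega), zero_mul]

lemma kerP_eq_zero_of_add_one_lt {ψ ψ' : Bool × ℕ} (h : ψ'.2 + 1 < ψ.2) :
    kerP lam mu ψ ψ' = 0 := by
  obtain ⟨b, m⟩ := ψ
  obtain ⟨c, n⟩ := ψ'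
  dsimp only at h
  have := Bool.toNat_le b
  exact kerP_eq_zero (by omega) (by omega)

lemma tsum_XS_eq_tsum {F : Bool × ℕ → ℝ} (hF : F (true, 0) = 0) :
    ∑' ψ : XS, F ψ = ∑' ψ, F ψ :=
  tsum_subtype_eq_of_support_subset fun ψ hψ hb => by
    obtain ⟨_ | _, _ | _⟩ := ψ <;> simp_all

lemma tsum_mul_kerP_succ (F : Bool × ℕ → ℝ) (c : Bool) (q : ℕ) :
    ∑' ψ : XS, F ψ * kerP lam mu ψ (c, q + 1) = (if c then mu else 1 - mu) *
      (lam * (F (false, q) + F (true, q + 1)) +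
        (1 - lam) * (F (false, q + 1) + F (true, q + 2))) := by
  rw [tsum_XS_eq_tsum (F := fun ψ => F ψ * kerP lam mu ψ (c, q + 1)) ?_,
    tsum_eq_sum (s := univ ×ˢ {q, q + 1, q + 2}) ?_]
  · cases c <;> simp [kerP, sum_product] <;> ring
  · rintro ⟨b, m⟩ hψ
    rw [kerP_eq_zero, mul_zero] <;> cases b <;> simp_all <;> omega
  · rw [kerP_eq_zero, mul_zero] <;> simp

-- Unlike in `tsum_mul_kerP_succ`, the state `(true, 0) ∉ XS` would contribute here:
-- `P((1,0),(0,0)) = λ`.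
lemma tsum_mul_kerP_zero (F : Bool × ℕ → ℝ) :
    ∑' ψ : XS, F ψ * kerP lam mu ψ (false, 0) = (1 - lam) * (F (false, 0) + F (true, 1)) := by
  rw [tsum_eq_sum (s := {⟨(false, 0), by simp⟩, ⟨(true, 1), by simp⟩}), sum_pair (by simp)]
  · simp [kerP]
    ring
  · rintro ⟨⟨b, m⟩, hb : b = true → 1 ≤ m⟩ hψ
    simp only [mem_insert, mem_singleton, Subtype.mk.injEq, Prod.mk.injEq] at hψ
    rw [kerP_eq_zero, mul_zero] <;> cases b <;> simp at hb hψ ⊢ <;> omega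

lemma kerIter_eq_zero_of_add_lt {ψ ψ' : Bool × ℕ} {i : ℕ} (h : ψ'.2 + i < ψ.2) :
    kerIter lam mu i ψ ψ' = 0 := by
  induction i generalizing ψ' with
  | zero => exact if_neg (by rintro rfl; omega)
  | succ i ih =>
    refine (tsum_congr fun ψ'' => ?_).trans tsum_zero
    by_cases hψ'' : ψ''.val.2 + i < ψ.2
    · rw [ih hψ'', zero_mul]
    · rw [kerP_eq_zero_of_add_one_lt (by omega), mul_zero]

lemma summable_mul_kerIter (F : Bool × ℕ → ℝ) (i : ℕ) (ψ : Bool × ℕ) :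
    Summable fun ψ' : XS => F ψ' * kerIter lam mu i ψ' ψ := by
  refine summable_of_ne_finset_zero (s := ((univ : Finset Bool) ×ˢ range (ψ.2 + i + 1)).subtype _)
    fun ψ' hψ' => ?_
  rw [kerIter_eq_zero_of_add_lt, mul_zero]
  simp only [mem_subtype, mem_product, mem_univ, mem_range, true_and] at hψ'
  omega

lemma kerIter_succ_apply_succ (i : ℕ) (ψ : Bool × ℕ) (c : Bool) (q : ℕ) :
    kerIter lam mu (i + 1) ψ (c, q + 1) = (if c then mu else 1 - mu) *
      (lam * (kerIter lam mu i ψ (false, q) + kerIter lam mu i ψ (true, q + 1)) +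
        (1 - lam) * (kerIter lam mu i ψ (false, q + 1) + kerIter lam mu i ψ (true, q + 2))) :=
  tsum_mul_kerP_succ (kerIter lam mu i ψ) c q

lemma kerIter_succ_apply_zero (i : ℕ) (ψ : Bool × ℕ) :
    kerIter lam mu (i + 1) ψ (false, 0) =
      (1 - lam) * (kerIter lam mu i ψ (false, 0) + kerIter lam mu i ψ (true, 1)) :=
  tsum_mul_kerP_zero (kerIter lam mu i ψ)

lemma hasSum_rfun (i : ℕ) (ψ : Bool × ℕ) :
    HasSum (fun ψ' : XS => (fInfo lam mu ψ' - Cap lam mu) * piPsi lam mu ψ' * kerIter lam mu i ψ' ψ)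
      (rfun lam mu i ψ) :=
  (summable_mul_kerIter (fun ψ => (fInfo lam mu ψ - Cap lam mu) * piPsi lam mu ψ) i ψ).hasSum

lemma rfun_zero (ψ : Bool × ℕ) (hψ : ψ.1 = true → 1 ≤ ψ.2) :
    rfun lam mu 0 ψ = (fInfo lam mu ψ - Cap lam mu) * piPsi lam mu ψ := by
  refine (tsum_eq_single ⟨ψ, hψ⟩ fun ψ' h => ?_).trans ?_
  · rw [kerIter, if_neg (Subtype.coe_ne_coe.mpr h), mul_zero]
  · rw [kerIter, if_pos rfl, mul_one]

noncomputable def levelMass (lam mu : ℝ) (i u : ℕ) : ℝ :=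
  rfun lam mu i (false, u) + rfun lam mu i (true, u + 1)

lemma rfun_succ_succ (i q : ℕ) (c : Bool) :
    rfun lam mu (i + 1) (c, q + 1) = (if c then mu else 1 - mu) *
      (lam * levelMass lam mu i q + (1 - lam) * levelMass lam mu i (q + 1)) := by
  refine HasSum.tsum_eq (HasSum.congr_fun
    (((((hasSum_rfun i _).add (hasSum_rfun i _)).mul_left lam).add
      (((hasSum_rfun i _).add (hasSum_rfun i _)).mul_left (1 - lam))).mul_left _) fun ψ => ?_)
  rw [kerIter_succ_apply_succ]
  ring

lemma rfun_succ_zero (i : ℕ) :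
    rfun lam mu (i + 1) (false, 0) = (1 - lam) * levelMass lam mu i 0 := by
  refine HasSum.tsum_eq (HasSum.congr_fun (((hasSum_rfun i _).add (hasSum_rfun i _)).mul_left
    (1 - lam)) fun ψ => ?_)
  rw [kerIter_succ_apply_zero]
  ring

lemma levelMass_succ_zero (i : ℕ) : levelMass lam mu (i + 1) 0 =
    (1 - lam * (1 - mu)) * levelMass lam mu i 0 + (1 - lam) * mu * levelMass lam mu i 1 := by
  rw [levelMass, rfun_succ_zero, rfun_succ_succ i 0 true, if_pos rfl]
  ring

lemma levelMass_succ_succ (i u : ℕ) : levelMass lam mu (i + 1) (u + 1) =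
    lam * (1 - mu) * levelMass lam mu i u +
      (1 - lam * (1 - mu) - (1 - lam) * mu) * levelMass lam mu i (u + 1) +
      (1 - lam) * mu * levelMass lam mu i (u + 2) := by
  rw [levelMass, rfun_succ_succ i u false, rfun_succ_succ i (u + 1) true, if_pos rfl,
    if_neg Bool.false_ne_true]
  ring

noncomputable def levelCDF (lam mu : ℝ) (i u : ℕ) : ℝ := ∑ v ∈ range u, levelMass lam mu i v

lemma levelCDF_succ_succ (i u : ℕ) : levelCDF lam mu (i + 1) (u + 1) =
    lam * (1 - mu) * levelCDF lam mu i u +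
      (1 - lam * (1 - mu) - (1 - lam) * mu) * levelCDF lam mu i (u + 1) +
      (1 - lam) * mu * levelCDF lam mu i (u + 2) := by
  induction u with
  | zero =>
    simp only [levelCDF, sum_range_succ, sum_range_zero, levelMass_succ_zero]
    ring
  | succ u ih =>
    rw [levelCDF, sum_range_succ, ← levelCDF, ih, levelMass_succ_succ]
    simp only [levelCDF, sum_range_succ]
    ring

noncomputable def levelWeight (lam mu : ℝ) (q : ℕ) : ℝ :=
  ∑ b : Bool, (fInfo lam mu (b, q) - Cap lam mu) * piPsi lam mu (b, q)

lemma M0_eq_neg_sum_levelWeight (q : ℕ) :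
    M0 lam mu q = -∑ v ∈ range (q + 1), levelWeight lam mu v := by
  have hmem (p : Bool × ℕ) :
      (p.1 = true → 1 ≤ p.2) ∧ p.2 ≤ q ↔ p ∈ (univ ×ˢ range (q + 1)).erase (true, 0) := by
    obtain ⟨_ | _, _ | m⟩ := p <;> simp
  let g (ψ : Bool × ℕ) := (Cap lam mu - fInfo lam mu ψ) * piPsi lam mu ψ
  have hg : g (true, 0) = 0 := by simp [g, piPsi]
  refine ((Equiv.subtypeEquivRight hmem).tsum_eq fun ψ => g ψ.1).trans ?_
  rw [Finset.tsum_subtype _ g, sum_erase (f := g) _ hg, sum_product_right, ← sum_neg_distrib]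
  refine sum_congr rfl fun v _ => ?_
  rw [levelWeight, ← sum_neg_distrib]
  exact sum_congr rfl fun b _ => by ring

lemma levelCDF_zero_succ (u : ℕ) :
    levelCDF lam mu 0 (u + 1) = rfun lam mu 0 (true, u + 1) - M0 lam mu u := by
  have hmass (v : ℕ) : levelMass lam mu 0 v = (fInfo lam mu (false, v) - Cap lam mu) *
      piPsi lam mu (false, v) + (fInfo lam mu (true, v + 1) - Cap lam mu) *
      piPsi lam mu (true, v + 1) := by
    rw [levelMass, rfun_zero _ (by simp), rfun_zero _ fun _ => by omega]
  rw [M0_eq_neg_sum_levelWeight, sub_neg_eq_add, rfun_zero _ fun _ => by omega]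
  induction u with
  | zero =>
    simp only [levelCDF, zero_add, sum_range_one, hmass, levelWeight, Fintype.sum_bool]
    rw [show piPsi lam mu (true, 0) = 0 from rfl]
    ring
  | succ u ih =>
    rw [levelCDF, sum_range_succ, ← levelCDF, ih, sum_range_succ (n := u + 1), hmass, levelWeight,
      Fintype.sum_bool]
    ring

lemma piQ_succ (q : ℕ) : piQ lam mu (q + 1) = piQ lam mu 1 * rho lam mu ^ q := by
  simp only [piQ, Nat.add_one_ne_zero, if_false, one_ne_zero]
  ring

lemma levelWeight_succ (q : ℕ) :
    levelWeight lam mu (q + 1) = levelWeight lam mu 1 * rho lam mu ^ q := by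
  simp only [levelWeight, Fintype.sum_bool, fInfo, piPsi, piQ_succ q, zero_add]
  ring

section
variable (h0 : 0 < lam) (h1 : lam < mu) (h2 : mu < 1)
include h0 h1 h2

lemma rho_mul : rho lam mu * ((1 - lam) * mu) = lam * (1 - mu) :=
  div_mul_cancel₀ _ (mul_ne_zero (by linarith) (by linarith))

lemma rho_pos : 0 < rho lam mu :=
  div_pos (mul_pos h0 (by linarith)) (mul_pos (by linarith) (by linarith))

lemma rho_lt_one : rho lam mu < 1 :=
  (div_lt_one (mul_pos (by linarith) (by linarith))).2 (by nlinarith)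

-- This is the statement that `f` has stationary mean `C`.
lemma levelWeight_zero_mul_add_levelWeight_one :
    levelWeight lam mu 0 * (1 - rho lam mu) + levelWeight lam mu 1 = 0 := by
  have hl : 1 - lam ≠ 0 := by linarith
  have hm : 1 - mu ≠ 0 := by linarith
  have hμ : mu ≠ 0 := by linarith
  simp only [levelWeight, Fintype.sum_bool, fInfo, piPsi, piQ, Cap, Hbin, rho, zero_sub, neg_sub,
    mul_zero, if_true, zero_add, one_ne_zero, if_false, pow_one]
  rw [Real.log_div hm hl, Real.log_div hμ h0.ne', one_div, Real.log_inv]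
  field_simp
  ring

lemma M0_mul_one_sub_rho (q : ℕ) :
    M0 lam mu q * (1 - rho lam mu) = levelWeight lam mu 1 * rho lam mu ^ q := by
  have hmean := levelWeight_zero_mul_add_levelWeight_one h0 h1 h2
  induction q with
  | zero =>
    rw [M0_eq_neg_sum_levelWeight, sum_range_one]
    linear_combination -hmean
  | succ q ih =>
    rw [M0_eq_neg_sum_levelWeight, sum_range_succ, neg_add, ← M0_eq_neg_sum_levelWeight,
      levelWeight_succ]
    linear_combination ih

lemma exists_levelCDF_zero_succ_eq_mul_rho_pow :
    ∃ κ, ∀ u, levelCDF lam mu 0 (u + 1) = κ * rho lam mu ^ u := by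
  refine ⟨(Real.log (mu / lam) - Cap lam mu) * mu * piQ lam mu 1 -
    levelWeight lam mu 1 / (1 - rho lam mu), fun u => ?_⟩
  have hρ : 1 - rho lam mu ≠ 0 := (sub_pos.2 (rho_lt_one h0 h1 h2)).ne'
  rw [levelCDF_zero_succ, rfun_zero _ fun _ => by omega,
    eq_div_of_mul_eq hρ (M0_mul_one_sub_rho h0 h1 h2 u)]
  simp only [fInfo, piPsi]
  rw [piQ_succ]
  ring

lemma exists_abs_levelMass_le :
    ∃ B θ, 0 ≤ θ ∧ θ < 1 ∧ ∀ i u, |levelMass lam mu i u| ≤ B * θ ^ i := by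
  obtain ⟨κ, hκ⟩ := exists_levelCDF_zero_succ_eq_mul_rho_pow h0 h1 h2
  have hρ0 := rho_pos h0 h1 h2
  have hρ1 := rho_lt_one h0 h1 h2
  set a := lam * (1 - mu) with ha_def
  set c := (1 - lam) * mu with hc_def
  set s := (1 + rho lam mu) / 2 with hs_def
  have ha : 0 ≤ a := mul_nonneg h0.le (by linarith)
  have hc : 0 < c := mul_pos (by linarith) (by linarith)
  have hb : 0 ≤ 1 - a - c := by nlinarith
  have hs : 0 < s := by positivity
  have hρs : rho lam mu < s := by linarith
  -- `a = c ρ`, so `a + b s + c s² - s = c (1 - s) (ρ - s) < 0`.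
  have hsuper : a + (1 - a - c) * s + c * s ^ 2 < 1 * s := by
    have hac : a = c * rho lam mu := by rw [ha_def, hc_def, ← rho_mul h0 h1 h2]; ring
    nlinarith [mul_pos hc (mul_pos (by linarith : 0 < 1 - s) (sub_pos.2 hρs))]
  set θ := (a + (1 - a - c) * s + c * s ^ 2) / s
  have hθ : a + (1 - a - c) * s + c * s ^ 2 ≤ θ * s := (div_mul_cancel₀ _ hs.ne').ge
  have hinit (u : ℕ) : |levelCDF lam mu 0 u| ≤ |κ| / s * s ^ u := by
    cases u with
    | zero => rw [levelCDF, sum_range_zero, abs_zero]; positivity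
    | succ u =>
      rw [hκ, abs_mul, abs_pow, abs_of_pos hρ0, pow_succ, div_mul_eq_mul_div, mul_div_assoc,
        mul_div_cancel_right₀ _ hs.ne']
      gcongr
  have hD := abs_le_of_supersolution ha hb hc.le hs hθ (fun i => sum_range_zero _)
    levelCDF_succ_succ hinit
  refine ⟨2 * (|κ| / s), θ, by positivity, (div_lt_one hs).2 (by linarith), fun i u => ?_⟩
  have hs1 : s ≤ 1 := by linarith
  rw [show levelMass lam mu i u = levelCDF lam mu i (u + 1) - levelCDF lam mu i u by
    rw [levelCDF, sum_range_succ, ← levelCDF, add_sub_cancel_left]]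
  calc _ ≤ |levelCDF lam mu i (u + 1)| + |levelCDF lam mu i u| := abs_sub _ _
    _ ≤ |κ| / s * θ ^ i * s ^ (u + 1) + |κ| / s * θ ^ i * s ^ u := add_le_add (hD i _) (hD i u)
    _ ≤ |κ| / s * θ ^ i * 1 + |κ| / s * θ ^ i * 1 := by
      gcongr <;> exact pow_le_one₀ hs.le hs1
    _ = 2 * (|κ| / s) * θ ^ i := by ring

lemma summable_rfun (ψ : Bool × ℕ) (hψ : ψ.1 = true → 1 ≤ ψ.2) :
    Summable fun i => rfun lam mu i ψ := by
  obtain ⟨B, θ, hθ0, hθ1, hB⟩ := exists_abs_levelMass_le h0 h1 h2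
  refine (summable_nat_add_iff 1).mp <| Summable.of_norm_bounded
    ((summable_geometric_of_lt_one hθ0 hθ1).mul_left B) fun i => ?_
  rw [Real.norm_eq_abs]
  obtain ⟨c, _ | q⟩ := ψ
  · obtain rfl : c = false := by simpa using hψ
    rw [rfun_succ_zero, abs_mul, abs_of_nonneg (by linarith)]
    exact (mul_le_of_le_one_left (abs_nonneg _) (by linarith)).trans (hB i 0)
  · have hdep : 0 ≤ (if c then mu else 1 - mu) ∧ (if c then mu else 1 - mu) ≤ 1 := by
      split_ifs <;> constructor <;> linarith
    rw [rfun_succ_succ, abs_mul, abs_of_nonneg hdep.1]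
    exact (mul_le_of_le_one_left (abs_nonneg _) hdep.2).trans
      (abs_convexComb_le h0.le (by linarith) (hB i q) (hB i (q + 1)))

lemma hasSum_levelMass (q : ℕ) :
    HasSum (fun i => levelMass lam mu i q) (Rfun lam mu (false, q) + Rfun lam mu (true, q + 1)) :=
  (summable_rfun h0 h1 h2 _ (by simp)).hasSum.add
    (summable_rfun h0 h1 h2 _ fun _ => by omega).hasSum

lemma Rfun_poisson_succ (c : Bool) (q : ℕ) : Rfun lam mu (c, q + 1) =
    (fInfo lam mu (c, q + 1) - Cap lam mu) * piPsi lam mu (c, q + 1) +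
      (if c then mu else 1 - mu) *
        (lam * (Rfun lam mu (false, q) + Rfun lam mu (true, q + 1)) +
          (1 - lam) * (Rfun lam mu (false, q + 1) + Rfun lam mu (true, q + 2))) := by
  rw [Rfun, (summable_rfun h0 h1 h2 _ fun _ => by omega).tsum_eq_zero_add,
    rfun_zero _ fun _ => by omega]
  exact congrArg _ <| HasSum.tsum_eq <| HasSum.congr_fun ((((hasSum_levelMass h0 h1 h2 q).mul_left
    lam).add ((hasSum_levelMass h0 h1 h2 (q + 1)).mul_left (1 - lam))).mul_left _)
    fun i => rfun_succ_succ i q c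

lemma Rfun_poisson_zero : Rfun lam mu (false, 0) =
    (fInfo lam mu (false, 0) - Cap lam mu) * piPsi lam mu (false, 0) +
      (1 - lam) * (Rfun lam mu (false, 0) + Rfun lam mu (true, 1)) := by
  conv_lhs =>
    rw [Rfun, (summable_rfun h0 h1 h2 _ (by simp)).tsum_eq_zero_add, rfun_zero _ (by simp)]
  exact congrArg _ <| HasSum.tsum_eq <| HasSum.congr_fun
    ((hasSum_levelMass h0 h1 h2 0).mul_left (1 - lam)) rfun_succ_zero

lemma Rfun_cut_eq_M0 (q : ℕ) :
    (1 - lam) * Rfun lam mu (true, q + 1) - lam * Rfun lam mu (false, q) = M0 lam mu q := by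
  induction q with
  | zero =>
    have h := Rfun_poisson_zero h0 h1 h2
    rw [M0_eq_neg_sum_levelWeight, sum_range_one, levelWeight, Fintype.sum_bool]
    simp only [piPsi, mul_zero, zero_add] at h ⊢
    linear_combination -h
  | succ q ih =>
    have hfalse := Rfun_poisson_succ h0 h1 h2 false q
    have htrue := Rfun_poisson_succ h0 h1 h2 true q
    rw [if_neg Bool.false_ne_true] at hfalse
    rw [if_pos rfl] at htrue
    rw [M0_eq_neg_sum_levelWeight, sum_range_succ, neg_add, ← M0_eq_neg_sum_levelWeight,
      levelWeight, Fintype.sum_bool]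
    linear_combination ih - hfalse - htrue

-- This is where `c_{M̃}` comes from: it is the coefficient of the forcing term in the recursion
-- for `R(0,·)`.
lemma forcing_eq_cMt (q : ℕ) :
    (1 - lam) * ((fInfo lam mu (false, q + 1) - Cap lam mu) * piPsi lam mu (false, q + 1)) +
      lam * (1 - mu) * M0 lam mu q + (1 - lam) * (1 - mu) * M0 lam mu (q + 1) =
      (1 - lam) * mu * cMt lam mu * rho lam mu ^ (q + 1) := by
  have hρ : 1 - rho lam mu ≠ 0 := (sub_pos.2 (rho_lt_one h0 h1 h2)).ne'
  have hscalar : (1 - lam) * (1 - mu) * (Real.log ((1 - mu) / (1 - lam)) - Cap lam mu) *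
      piQ lam mu 1 * (1 - rho lam mu) +
      (1 - mu) * (lam + (1 - lam) * rho lam mu) * levelWeight lam mu 1 =
      (1 - lam) * mu * cMt lam mu * rho lam mu * (1 - rho lam mu) := by
    have hl : 1 - lam ≠ 0 := by linarith
    have hm : 1 - mu ≠ 0 := by linarith
    have hμ : mu ≠ 0 := by linarith
    simp only [levelWeight, Fintype.sum_bool, fInfo, piPsi, piQ, cMt, cM0, rho, one_ne_zero,
      if_true, if_false, pow_one, zero_add]
    field_simp
    ring
  apply mul_right_cancel₀ hρ
  simp only [fInfo, piPsi]
  rw [piQ_succ]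
  linear_combination (lam * (1 - mu)) * M0_mul_one_sub_rho h0 h1 h2 q +
    ((1 - lam) * (1 - mu)) * M0_mul_one_sub_rho h0 h1 h2 (q + 1) + rho lam mu ^ q * hscalar

lemma Rfun_false_succ (q : ℕ) : Rfun lam mu (false, q + 1) =
    rho lam mu * Rfun lam mu (false, q) + cMt lam mu * rho lam mu ^ (q + 1) := by
  have hfalse := Rfun_poisson_succ h0 h1 h2 false q
  rw [if_neg Bool.false_ne_true] at hfalse
  refine mul_left_cancel₀ (mul_ne_zero (by linarith : 1 - lam ≠ 0) (by linarith : mu ≠ 0)) ?_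
  linear_combination (1 - lam) * hfalse + (lam * (1 - mu)) * Rfun_cut_eq_M0 h0 h1 h2 q +
    ((1 - lam) * (1 - mu)) * Rfun_cut_eq_M0 h0 h1 h2 (q + 1) + forcing_eq_cMt h0 h1 h2 q -
    Rfun lam mu (false, q) * rho_mul h0 h1 h2

end

/-- for every `q ≥ 0`, `λ̄ R(1,q+1) - λ R(0,q) = M(q,0)` and
`R(0,q+1) = ρ R(0,q) + c_{M̃} ρ^{q+1}`. -/
theorem Rfun_recursions (lam mu : ℝ) (h0 : 0 < lam) (h1 : lam < mu) (h2 : mu < 1) :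
    ∀ q : ℕ,
      (1 - lam) * Rfun lam mu (true, q + 1) - lam * Rfun lam mu (false, q) = M0 lam mu q ∧
      Rfun lam mu (false, q + 1) =
        rho lam mu * Rfun lam mu (false, q) + cMt lam mu * rho lam mu ^ (q + 1) :=
  fun q => ⟨Rfun_cut_eq_M0 h0 h1 h2 q, Rfun_false_succ h0 h1 h2 q⟩
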